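/- arXiv:1802.01767 — 5 statements merged into one kernel-verified Lean document; each statement's English description precedes it below -/
import Mathlib

section
/- Doctrinal adjunction (sufficiency direction): let T be a 2-monad on a 2-category B, let (f ⊣ g, ε, ρ) : Y → Z be an adjunction in B, and let ⟨f̄⟩ : f ∘ a_Y ⇒ a_Z ∘ T(f) and ⟨ḡ⟩ : a_Z ∘ T(g) ⇒ g ∘ a_Y be colax and lax T-morphism structures on f and g respectively between lax T-algebras (Y, a_Y) and (Z, a_Z). If ⟨f̄⟩ is invertible and the mate of ⟨ḡ⟩ under T(f) ⊣ T(g) and f ⊣ g equals ⟨f̄⟩⁻¹, then ε and ρ are T-transformations, i.e., the adjunction lifts to an adjunction in the 2-category of lax T-algebras and lax T-morphisms. -/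
open CategoryTheory Bicategory

universe w v u

variable {B : Type u} [Bicategory.{w, v} B]

/-- Data of a lax algebra for a pseudomonad whose underlying pseudofunctor is `T`, with
multiplication `m` and unit `e`. -/
structure LaxAlgebra (T : Pseudofunctor B B) (m : ∀ X : B, T.obj (T.obj X) ⟶ T.obj X)
    (e : ∀ X : B, X ⟶ T.obj X) where
  carrier : B
  act : T.obj carrier ⟶ carrier
  lax_assoc : T.map act ≫ act ⟶ m carrier ≫ act
  lax_unit : 𝟙 carrier ⟶ e carrier ≫ act

variable {T : Pseudofunctor B B} {m : ∀ X : B, T.obj (T.obj X) ⟶ T.obj X}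
  {e : ∀ X : B, X ⟶ T.obj X}

/-- The type of lax `T`-morphism structure 2-cells on a 1-cell `h` between the carriers of
two lax `T`-algebras. -/
abbrev LaxCell (Ya Za : LaxAlgebra T m e) (h : Ya.carrier ⟶ Za.carrier) : Type _ :=
  T.map h ≫ Za.act ⟶ Ya.act ≫ h

/-- The type of colax `T`-morphism structure 2-cells. -/
abbrev ColaxCell (Ya Za : LaxAlgebra T m e) (h : Ya.carrier ⟶ Za.carrier) : Type _ :=
  Ya.act ≫ h ⟶ T.map h ≫ Za.act

/-- A 2-cell `μ : h ⟶ k` is a `T`-transformation between the lax `T`-morphisms `(h, φh)` and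
`(k, φk)` when it is compatible with the structure 2-cells. -/
def IsTTrans {Ya Za : LaxAlgebra T m e} {h k : Ya.carrier ⟶ Za.carrier}
    (φh : LaxCell Ya Za h) (φk : LaxCell Ya Za k) (μ : h ⟶ k) : Prop :=
  (T.map₂ μ ▷ Za.act) ≫ φk = φh ≫ (Ya.act ◁ μ)

/-- The structure 2-cell of the composite of two lax `T`-morphisms. -/
def compCell {Xa Ya Za : LaxAlgebra T m e} {h : Xa.carrier ⟶ Ya.carrier}
    {k : Ya.carrier ⟶ Za.carrier} (φ : LaxCell Xa Ya h) (ψ : LaxCell Ya Za k) :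
    LaxCell Xa Za (h ≫ k) :=
  (T.mapComp h k).hom ▷ Za.act ≫ (α_ (T.map h) (T.map k) Za.act).hom ≫ T.map h ◁ ψ ≫
    (α_ (T.map h) Ya.act k).inv ≫ φ ▷ k ≫ (α_ Xa.act h k).hom

/-- The structure 2-cell of the identity lax `T`-morphism. -/
def idCell (Ya : LaxAlgebra T m e) : LaxCell Ya Ya (𝟙 Ya.carrier) :=
  (T.mapId Ya.carrier).hom ▷ Ya.act ≫ (λ_ Ya.act).hom ≫ (ρ_ Ya.act).inv

/-- The mate of a 2-cell `α : n ∘ u ⇒ g ∘ m` under the adjunctions `l ⊣ u` and `f ⊣ g`. -/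
def mateFwd {W X Y Z : B} {f : Z ⟶ Y} {g : Y ⟶ Z} {l : W ⟶ X} {u : X ⟶ W}
    (adj₁ : Bicategory.Adjunction f g) (adj₂ : Bicategory.Adjunction l u)
    (m' : X ⟶ Y) (n : W ⟶ Z) (α : u ≫ n ⟶ m' ≫ g) : n ≫ f ⟶ l ≫ m' :=
  (λ_ n).inv ▷ f ≫ (adj₂.unit ▷ n) ▷ f ≫ (α_ l u n).hom ▷ f ≫ (α_ l (u ≫ n) f).hom ≫
    l ◁ (α ▷ f) ≫ l ◁ (α_ m' g f).hom ≫ l ◁ (m' ◁ adj₁.counit) ≫ l ◁ (ρ_ m').hom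

/-- The inverse mate of a 2-cell `β : f ∘ n ⇒ m ∘ l` under the adjunctions `l ⊣ u` and
`f ⊣ g`. -/
def mateBwd {W X Y Z : B} {f : Z ⟶ Y} {g : Y ⟶ Z} {l : W ⟶ X} {u : X ⟶ W}
    (adj₁ : Bicategory.Adjunction f g) (adj₂ : Bicategory.Adjunction l u)
    (m' : X ⟶ Y) (n : W ⟶ Z) (β : n ≫ f ⟶ l ≫ m') : u ≫ n ⟶ m' ≫ g :=
  (ρ_ (u ≫ n)).inv ≫ (u ≫ n) ◁ adj₁.unit ≫ (α_ (u ≫ n) f g).inv ≫ (α_ u n f).hom ▷ g ≫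
    (u ◁ β) ▷ g ≫ (α_ u l m').inv ▷ g ≫ (adj₂.counit ▷ m') ▷ g ≫ (λ_ m').hom ▷ g


lemma star1 {Y Z TY TZ : B} {f : Y ⟶ Z} {g : Z ⟶ Y} {F : TY ⟶ TZ} {G : TZ ⟶ TY}
    (adj : Bicategory.Adjunction f g) (adjT : Bicategory.Adjunction F G)
    (a : TY ⟶ Y) (b : TZ ⟶ Z) (φ : G ≫ a ⟶ b ≫ g) :
    G ◁ mateFwd adj adjT b a φ ≫ (α_ G F b).inv ≫ adjT.counit ▷ b ≫ (λ_ b).hom ≫ (ρ_ b).inv =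
      (α_ G a f).inv ≫ φ ▷ f ≫ (α_ b g f).hom ≫ b ◁ adj.counit := by
  calc
    _ = 𝟙 _ ⊗≫ G ◁ adjT.unit ▷ (a ≫ f) ⊗≫
        ((G ≫ F) ◁ ((α_ G a f).inv ≫ φ ▷ f ≫ (α_ b g f).hom ≫ b ◁ adj.counit ≫ (ρ_ b).hom) ≫
          adjT.counit ▷ b) ⊗≫ 𝟙 _ := by
      dsimp only [mateFwd]; bicategory
    _ = 𝟙 _ ⊗≫ rightZigzag adjT.unit adjT.counit ▷ (a ≫ f) ⊗≫
        ((α_ G a f).inv ≫ φ ▷ f ≫ (α_ b g f).hom ≫ b ◁ adj.counit ≫ (ρ_ b).hom) ⊗≫ 𝟙 _ := by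
      rw [whisker_exchange]; bicategory
    _ = (α_ G a f).inv ≫ φ ▷ f ≫ (α_ b g f).hom ≫ b ◁ adj.counit := by
      rw [adjT.right_triangle]; bicategory

lemma star2 {Y Z TY TZ : B} {f : Y ⟶ Z} {g : Z ⟶ Y} {F : TY ⟶ TZ} {G : TZ ⟶ TY}
    (adj : Bicategory.Adjunction f g) (adjT : Bicategory.Adjunction F G)
    (a : TY ⟶ Y) (b : TZ ⟶ Z) (φ : G ≫ a ⟶ b ≫ g) :
    (λ_ a).hom ≫ (ρ_ a).inv ≫ a ◁ adj.unit ≫ (α_ a f g).inv ≫ mateFwd adj adjT b a φ ▷ g =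
      adjT.unit ▷ a ≫ (α_ F G a).hom ≫ F ◁ φ ≫ (α_ F b g).inv := by
  calc
    _ = 𝟙 _ ⊗≫ (𝟙 TY ◁ (a ◁ adj.unit) ≫ adjT.unit ▷ (a ≫ f ≫ g)) ⊗≫
        F ◁ (((α_ G a f).inv ≫ φ ▷ f ≫ (α_ b g f).hom ≫ b ◁ adj.counit ≫ (ρ_ b).hom) ▷ g) ⊗≫
        𝟙 _ := by
      dsimp only [mateFwd]; bicategory
    _ = 𝟙 _ ⊗≫ adjT.unit ▷ a ⊗≫
        F ◁ (𝟙 (G ≫ a) ⊗≫ ((G ≫ a) ◁ adj.unit ≫ φ ▷ (f ≫ g)) ⊗≫ b ◁ (adj.counit ▷ g) ⊗≫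
          𝟙 (b ≫ g)) ⊗≫ 𝟙 _ := by
      rw [whisker_exchange]; bicategory
    _ = 𝟙 _ ⊗≫ adjT.unit ▷ a ⊗≫
        F ◁ (𝟙 (G ≫ a) ⊗≫ φ ⊗≫ b ◁ rightZigzag adj.unit adj.counit ⊗≫ 𝟙 (b ≫ g)) ⊗≫
        𝟙 _ := by
      rw [whisker_exchange]; bicategory
    _ = adjT.unit ▷ a ≫ (α_ F G a).hom ≫ F ◁ φ ≫ (α_ F b g).inv := by
      rw [adj.right_triangle]; bicategory

/-- Doctrinal adjunction, sufficiency: if the colax structure `ψ` on the left adjoint `f` is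
invertible and the mate of the lax structure `φ` on the right adjoint `g` corresponds to `ψ`
(i.e. equals the inverse of the lax structure `ψ⁻¹` of `f`), then the counit and unit of the
adjunction are `T`-transformations, i.e. the adjunction lifts to lax `T`-algebras and lax
`T`-morphisms. -/
theorem doctrinal_adjunction_sufficiency (Ya Za : LaxAlgebra T m e)
    {f : Ya.carrier ⟶ Za.carrier} {g : Za.carrier ⟶ Ya.carrier}
    (adj : Bicategory.Adjunction f g)
    (adjT : Bicategory.Adjunction (T.map f) (T.map g))
    (hTu : adjT.unit = (T.mapId _).inv ≫ T.map₂ adj.unit ≫ (T.mapComp f g).hom)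
    (hTc : adjT.counit = (T.mapComp g f).inv ≫ T.map₂ adj.counit ≫ (T.mapId _).hom)
    (ψ : ColaxCell Ya Za f) (φ : LaxCell Za Ya g) [hiso : IsIso ψ]
    (hmate : mateFwd adj adjT Za.act Ya.act φ = ψ) :
    IsTTrans (compCell φ (CategoryTheory.inv ψ : LaxCell Ya Za f)) (idCell Za) adj.counit ∧
    IsTTrans (idCell Ya) (compCell (CategoryTheory.inv ψ : LaxCell Ya Za f) φ) adj.unit := by
  have hε2 : T.map₂ adj.counit = (T.mapComp g f).hom ≫ adjT.counit ≫ (T.mapId Za.carrier).inv := by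
    rw [hTc]; simp
  have hη2 : T.map₂ adj.unit = (T.mapId Ya.carrier).hom ≫ adjT.unit ≫ (T.mapComp f g).inv := by
    rw [hTu]; simp
  have key1 := star1 adj adjT Ya.act Za.act φ
  have key2 := star2 adj adjT Ya.act Za.act φ
  rw [hmate] at key1 key2
  constructor
  · unfold IsTTrans compCell idCell
    simp only [Category.assoc]
    rw [← key1, hε2]
    simp [← Bicategory.inv_whiskerLeft]
  · unfold IsTTrans compCell idCell
    have key2' := congrArg (fun x => x ≫ (CategoryTheory.inv ψ ▷ g ≫ (α_ Ya.act f g).hom)) key2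
    simp only [Category.assoc, ← Bicategory.inv_whiskerRight, IsIso.hom_inv_id_assoc,
      Iso.inv_hom_id_assoc, Iso.inv_hom_id, Category.comp_id] at key2'
    rw [hη2]
    simp only [comp_whiskerRight, Category.assoc, inv_hom_whiskerRight_assoc]
    rw [key2']
    simp
end

section
/- Doctrinal adjunction (necessity direction): with notation as before, if ε and ρ give T-transformations ε̃ : f g ⇒ id and ρ̃ : id ⇒ g f in the 2-category of lax T-algebras and lax T-morphisms, then the colax structure cell ⟨f̄⟩ is invertible and the mate of ⟨ḡ⟩ under T(f) ⊣ T(g) and f ⊣ g equals ⟨f̄⟩⁻¹. -/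
open CategoryTheory Bicategory

universe w v u

variable {B : Type u} [Bicategory.{w, v} B]

variable {T : Pseudofunctor B B} {m : ∀ X : B, T.obj (T.obj X) ⟶ T.obj X}
  {e : ∀ X : B, X ⟶ T.obj X}

/-- Doctrinal adjunction, necessity: if the counit and unit of the adjunction `(f ⊣ g, ε, ρ)`
are `T`-transformations with respect to the lax structures `λf` on `f` and `φ` on `g`, then
`λf` is invertible and the mate of `φ` under `T(f) ⊣ T(g)` and `f ⊣ g` equals `λf⁻¹`. -/
theorem doctrinal_adjunction_necessity (Ya Za : LaxAlgebra T m e)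
    {f : Ya.carrier ⟶ Za.carrier} {g : Za.carrier ⟶ Ya.carrier}
    (adj : Bicategory.Adjunction f g)
    (adjT : Bicategory.Adjunction (T.map f) (T.map g))
    (hTu : adjT.unit = (T.mapId _).inv ≫ T.map₂ adj.unit ≫ (T.mapComp f g).hom)
    (hTc : adjT.counit = (T.mapComp g f).inv ≫ T.map₂ adj.counit ≫ (T.mapId _).hom)
    (lf : LaxCell Ya Za f) (φ : LaxCell Za Ya g)
    (hε : IsTTrans (compCell φ lf) (idCell Za) adj.counit)
    (hρ : IsTTrans (idCell Ya) (compCell lf φ) adj.unit) :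
    IsIso lf ∧
    mateFwd adj adjT Za.act Ya.act φ ≫ lf = 𝟙 (Ya.act ≫ f) ∧
    lf ≫ mateFwd adj adjT Za.act Ya.act φ = 𝟙 (T.map f ≫ Za.act) := by

  have key1 : T.map₂ adj.unit ▷ Ya.act ⊗≫ (T.mapComp f g).hom ▷ Ya.act ⊗≫
      T.map f ◁ φ ⊗≫ lf ▷ g ⊗≫ 𝟙 (Ya.act ≫ f ≫ g) =
      (T.mapId _).hom ▷ Ya.act ⊗≫ Ya.act ◁ adj.unit ⊗≫ 𝟙 (Ya.act ≫ f ≫ g) := by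
    calc _ = (T.map₂ adj.unit ▷ Ya.act) ≫ compCell lf φ := by
            simp only [compCell]; bicategory
      _ = idCell Ya ≫ (Ya.act ◁ adj.unit) := hρ
      _ = _ := by simp only [idCell]; bicategory
  have key2 : (T.mapComp g f).hom ▷ Za.act ⊗≫ T.map g ◁ lf ⊗≫ φ ▷ f ⊗≫
      Za.act ◁ adj.counit ⊗≫ 𝟙 Za.act =
      T.map₂ adj.counit ▷ Za.act ⊗≫ (T.mapId _).hom ▷ Za.act ⊗≫ 𝟙 Za.act := by
    calc _ = (compCell φ lf ≫ (Za.act ◁ adj.counit)) ≫ (ρ_ Za.act).hom := by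
            simp only [compCell]; bicategory
      _ = ((T.map₂ adj.counit ▷ Za.act) ≫ idCell Za) ≫ (ρ_ Za.act).hom := by rw [hε]
      _ = _ := by simp only [idCell]; bicategory
  have eq1 : mateFwd adj adjT Za.act Ya.act φ ≫ lf = 𝟙 (Ya.act ≫ f) := by
    calc mateFwd adj adjT Za.act Ya.act φ ≫ lf
        = 𝟙 _ ⊗≫ (adjT.unit ▷ Ya.act) ▷ f ⊗≫ T.map f ◁ (φ ▷ f) ⊗≫
            ((T.map f ≫ Za.act) ◁ adj.counit ≫ lf ▷ 𝟙 Za.carrier) ⊗≫ 𝟙 _ := by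
          simp only [mateFwd]; bicategory
      _ = 𝟙 _ ⊗≫ (adjT.unit ▷ Ya.act) ▷ f ⊗≫ T.map f ◁ (φ ▷ f) ⊗≫
            (lf ▷ (g ≫ f) ≫ (Ya.act ≫ f) ◁ adj.counit) ⊗≫ 𝟙 _ := by
          rw [whisker_exchange]
      _ = 𝟙 _ ⊗≫ ((T.mapId _).inv ▷ Ya.act) ▷ f ⊗≫
            (T.map₂ adj.unit ▷ Ya.act ⊗≫ (T.mapComp f g).hom ▷ Ya.act ⊗≫
              T.map f ◁ φ ⊗≫ lf ▷ g ⊗≫ 𝟙 (Ya.act ≫ f ≫ g)) ▷ f ⊗≫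
            (Ya.act ≫ f) ◁ adj.counit ⊗≫ 𝟙 _ := by
          rw [hTu]; bicategory
      _ = 𝟙 _ ⊗≫ ((T.mapId _).inv ▷ Ya.act) ▷ f ⊗≫
            ((T.mapId _).hom ▷ Ya.act ⊗≫ Ya.act ◁ adj.unit ⊗≫ 𝟙 (Ya.act ≫ f ≫ g)) ▷ f ⊗≫
            (Ya.act ≫ f) ◁ adj.counit ⊗≫ 𝟙 _ := by
          rw [key1]
      _ = 𝟙 _ ⊗≫ (((T.mapId _).inv ≫ (T.mapId _).hom) ▷ Ya.act) ▷ f ⊗≫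
            (Ya.act ◁ adj.unit) ▷ f ⊗≫ (Ya.act ≫ f) ◁ adj.counit ⊗≫ 𝟙 _ := by
          bicategory
      _ = 𝟙 _ ⊗≫ Ya.act ◁ leftZigzag adj.unit adj.counit ⊗≫ 𝟙 _ := by
          rw [Iso.inv_hom_id]; bicategory
      _ = 𝟙 (Ya.act ≫ f) := by rw [adj.left_triangle]; bicategory
  have eq2 : lf ≫ mateFwd adj adjT Za.act Ya.act φ = 𝟙 (T.map f ≫ Za.act) := by
    calc lf ≫ mateFwd adj adjT Za.act Ya.act φ
        = 𝟙 _ ⊗≫ (𝟙 (T.obj Ya.carrier) ◁ lf ≫ adjT.unit ▷ (Ya.act ≫ f)) ⊗≫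
            T.map f ◁ (φ ▷ f) ⊗≫ T.map f ◁ (Za.act ◁ adj.counit) ⊗≫ 𝟙 _ := by
          simp only [mateFwd]; bicategory
      _ = 𝟙 _ ⊗≫ (adjT.unit ▷ (T.map f ≫ Za.act) ≫ (T.map f ≫ T.map g) ◁ lf) ⊗≫
            T.map f ◁ (φ ▷ f) ⊗≫ T.map f ◁ (Za.act ◁ adj.counit) ⊗≫ 𝟙 _ := by
          rw [whisker_exchange]
      _ = 𝟙 _ ⊗≫ adjT.unit ▷ (T.map f ≫ Za.act) ⊗≫
            T.map f ◁ ((((T.mapComp g f).inv ≫ (T.mapComp g f).hom) ▷ Za.act) ⊗≫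
              T.map g ◁ lf ⊗≫ φ ▷ f ⊗≫ Za.act ◁ adj.counit ⊗≫ 𝟙 Za.act) ⊗≫ 𝟙 _ := by
          rw [Iso.inv_hom_id]; bicategory
      _ = 𝟙 _ ⊗≫ adjT.unit ▷ (T.map f ≫ Za.act) ⊗≫
            T.map f ◁ ((T.mapComp g f).inv ▷ Za.act ⊗≫
              ((T.mapComp g f).hom ▷ Za.act ⊗≫ T.map g ◁ lf ⊗≫ φ ▷ f ⊗≫
                Za.act ◁ adj.counit ⊗≫ 𝟙 Za.act)) ⊗≫ 𝟙 _ := by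
          bicategory
      _ = 𝟙 _ ⊗≫ adjT.unit ▷ (T.map f ≫ Za.act) ⊗≫
            T.map f ◁ ((T.mapComp g f).inv ▷ Za.act ⊗≫
              (T.map₂ adj.counit ▷ Za.act ⊗≫ (T.mapId _).hom ▷ Za.act ⊗≫ 𝟙 Za.act)) ⊗≫
            𝟙 _ := by
          rw [key2]
      _ = 𝟙 _ ⊗≫ adjT.unit ▷ (T.map f ≫ Za.act) ⊗≫
            T.map f ◁ ((((T.mapComp g f).inv ≫ T.map₂ adj.counit ≫ (T.mapId _).hom))
              ▷ Za.act) ⊗≫ 𝟙 _ := by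
          bicategory
      _ = 𝟙 _ ⊗≫ adjT.unit ▷ (T.map f ≫ Za.act) ⊗≫
            T.map f ◁ (adjT.counit ▷ Za.act) ⊗≫ 𝟙 _ := by
          rw [← hTc]
      _ = 𝟙 _ ⊗≫ leftZigzag adjT.unit adjT.counit ▷ Za.act ⊗≫ 𝟙 _ := by
          bicategory
      _ = 𝟙 (T.map f ≫ Za.act) := by rw [adjT.left_triangle]; bicategory
  exact ⟨⟨mateFwd adj adjT Za.act Ya.act φ, eq2, eq1⟩, eq1, eq2⟩
end

section
/- Let T be a lax idempotent (Kock–Zöberlein) pseudomonad on a 2-category B, meaning the forgetful 2-functor U : Lax-T-Alg_ℓ → B is locally an isomorphism (fully faithful). Then for any adjunction (f ⊣ U(ĝ), ε, ρ) in B with ĝ a lax T-morphism, there exists a unique lax T-morphism f̂ with U(f̂) = f, f̂ is a T-pseudomorphism, f̂ ⊣ ĝ in Lax-T-Alg_ℓ, and ĝ satisfies the Beck–Chevalley condition (the mate of its structure 2-cell under T(f) ⊣ T(g) and f ⊣ g is invertible). -/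
open CategoryTheory Bicategory

universe w v u

variable {B : Type u} [Bicategory.{w, v} B]

variable {T : Pseudofunctor B B} {m : ∀ X : B, T.obj (T.obj X) ⟶ T.obj X}
  {e : ∀ X : B, X ⟶ T.obj X}

section AuxMate

open Category

private lemma mate_inverse_aux {y z y' z' : B} {f : y ⟶ z} {g : z ⟶ y} {F : y' ⟶ z'}
    {G : z' ⟶ y'} (adj : Bicategory.Adjunction f g) (adj' : Bicategory.Adjunction F G)
    {a : y' ⟶ y} {b : z' ⟶ z}
    (lf : F ≫ b ⟶ a ≫ f) (φg : G ≫ a ⟶ b ≫ g)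
    (hE : G ◁ lf ⊗≫ φg ▷ f ⊗≫ b ◁ adj.counit = 𝟙 _ ⊗≫ adj'.counit ▷ b ⊗≫ 𝟙 _)
    (hH : adj'.unit ▷ a ⊗≫ F ◁ φg ⊗≫ lf ▷ g = 𝟙 _ ⊗≫ a ◁ adj.unit ⊗≫ 𝟙 _) :
    lf ≫ mateFwd adj adj' b a φg = 𝟙 _ ∧ mateFwd adj adj' b a φg ≫ lf = 𝟙 _ := by
  constructor
  · calc lf ≫ mateFwd adj adj' b a φg
        = 𝟙 _ ⊗≫ (𝟙 _ ◁ lf ≫ adj'.unit ▷ (a ≫ f)) ⊗≫ F ◁ (φg ▷ f) ⊗≫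
            F ◁ (b ◁ adj.counit) ⊗≫ 𝟙 _ := by
          dsimp only [mateFwd]; bicategory
      _ = 𝟙 _ ⊗≫ adj'.unit ▷ (F ≫ b) ⊗≫ F ◁ (G ◁ lf ⊗≫ φg ▷ f ⊗≫ b ◁ adj.counit) ⊗≫ 𝟙 _ := by
          rw [whisker_exchange]; bicategory
      _ = 𝟙 _ ⊗≫ (leftZigzag adj'.unit adj'.counit) ▷ b ⊗≫ 𝟙 _ := by
          rw [hE]; dsimp only [leftZigzag]; bicategory
      _ = 𝟙 (F ≫ b) := by rw [adj'.left_triangle]; bicategory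
  · calc mateFwd adj adj' b a φg ≫ lf
        = 𝟙 _ ⊗≫ adj'.unit ▷ a ▷ f ⊗≫ F ◁ φg ▷ f ⊗≫
            ((F ≫ b) ◁ adj.counit ≫ lf ▷ 𝟙 z) ⊗≫ 𝟙 _ := by
          dsimp only [mateFwd]; bicategory
      _ = 𝟙 _ ⊗≫ (adj'.unit ▷ a ⊗≫ F ◁ φg ⊗≫ lf ▷ g) ▷ f ⊗≫ (a ≫ f) ◁ adj.counit ⊗≫ 𝟙 _ := by
          rw [whisker_exchange]; bicategory
      _ = 𝟙 _ ⊗≫ a ◁ (leftZigzag adj.unit adj.counit) ⊗≫ 𝟙 _ := by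
          rw [hH]; dsimp only [leftZigzag]; bicategory
      _ = 𝟙 (a ≫ f) := by rw [adj.left_triangle]; bicategory

end AuxMate

/-- Kock–Zöberlein (lax idempotent) pseudomonads: if the forgetful 2-functor from lax
`T`-algebras is locally an isomorphism (every 1-cell between carriers admits a unique lax
`T`-morphism structure cell, and every 2-cell is a `T`-transformation), then for every
adjunction `(f ⊣ g, ε, ρ)` in `B` whose right adjoint underlies a lax `T`-morphism
`(g, φg)`, there is a unique lax structure `lf` on `f`; moreover `(f, lf)` is a
`T`-pseudomorphism, the adjunction lifts (`ε` and `ρ` are `T`-transformations), and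
`(g, φg)` satisfies the Beck–Chevalley condition: the mate of `φg` is invertible. -/
theorem lax_idempotent_lifting_and_beck_chevalley
    (H1 : ∀ (Xa Wa : LaxAlgebra T m e) (h : Xa.carrier ⟶ Wa.carrier),
      ∃! _ : LaxCell Xa Wa h, True)
    (H2 : ∀ (Xa Wa : LaxAlgebra T m e) (h k : Xa.carrier ⟶ Wa.carrier)
      (φh : LaxCell Xa Wa h) (φk : LaxCell Xa Wa k) (μ : h ⟶ k), IsTTrans φh φk μ)
    (Tadj : ∀ {a b : B} {p : a ⟶ b} {q : b ⟶ a},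
      Bicategory.Adjunction p q → Bicategory.Adjunction (T.map p) (T.map q))
    (hTadjU : ∀ {a b : B} {p : a ⟶ b} {q : b ⟶ a} (adj : Bicategory.Adjunction p q),
      (Tadj adj).unit = (T.mapId a).inv ≫ T.map₂ adj.unit ≫ (T.mapComp p q).hom)
    (hTadjC : ∀ {a b : B} {p : a ⟶ b} {q : b ⟶ a} (adj : Bicategory.Adjunction p q),
      (Tadj adj).counit = (T.mapComp q p).inv ≫ T.map₂ adj.counit ≫ (T.mapId b).hom)
    (Ya Za : LaxAlgebra T m e)
    {f : Ya.carrier ⟶ Za.carrier} {g : Za.carrier ⟶ Ya.carrier}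
    (adj : Bicategory.Adjunction f g) (φg : LaxCell Za Ya g) :
    ∃ lf : LaxCell Ya Za f,
      (∀ lf' : LaxCell Ya Za f, lf' = lf) ∧
      IsIso lf ∧
      IsTTrans (compCell φg lf) (idCell Za) adj.counit ∧
      IsTTrans (idCell Ya) (compCell lf φg) adj.unit ∧
      IsIso (mateFwd adj (Tadj adj) Za.act Ya.act φg) := by
  obtain ⟨lf, -, huniq⟩ := H1 Ya Za f
  have uniq : ∀ lf' : LaxCell Ya Za f, lf' = lf := fun lf' => huniq lf' trivial
  have hC : T.map₂ adj.counit
      = (T.mapComp g f).hom ≫ (Tadj adj).counit ≫ (T.mapId Za.carrier).inv := by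
    rw [hTadjC adj]; simp
  have hU : T.map₂ adj.unit
      = (T.mapId Ya.carrier).hom ≫ (Tadj adj).unit ≫ (T.mapComp f g).inv := by
    rw [hTadjU adj]; simp
  have E : IsTTrans (compCell φg lf) (idCell Za) adj.counit :=
    H2 Za Za (g ≫ f) (𝟙 _) (compCell φg lf) (idCell Za) adj.counit
  have H : IsTTrans (idCell Ya) (compCell lf φg) adj.unit :=
    H2 Ya Ya (𝟙 _) (f ≫ g) (idCell Ya) (compCell lf φg) adj.unit
  have e1 : (T.mapComp g f).hom ▷ Za.act ≫ ((α_ (T.map g) (T.map f) Za.act).hom ≫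
        (T.map g ◁ (lf : T.map f ≫ Za.act ⟶ Ya.act ≫ f) ⊗≫ φg ▷ f ⊗≫ Za.act ◁ adj.counit))
      = compCell φg lf ≫ Za.act ◁ adj.counit := by
    dsimp only [compCell]; bicategory
  have e2 : (T.mapComp g f).hom ▷ Za.act ≫ ((α_ (T.map g) (T.map f) Za.act).hom ≫
        (𝟙 _ ⊗≫ (Tadj adj).counit ▷ Za.act ⊗≫ 𝟙 _))
      = T.map₂ adj.counit ▷ Za.act ≫ idCell Za := by
    rw [hC]; dsimp only [idCell]
    simp only [comp_whiskerRight, Category.assoc, inv_hom_whiskerRight_assoc]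
    bicategory
  have hE : T.map g ◁ (lf : T.map f ≫ Za.act ⟶ Ya.act ≫ f) ⊗≫ φg ▷ f ⊗≫ Za.act ◁ adj.counit
      = 𝟙 _ ⊗≫ (Tadj adj).counit ▷ Za.act ⊗≫ 𝟙 _ := by
    rw [← cancel_epi ((α_ (T.map g) (T.map f) Za.act).hom),
      ← cancel_epi ((T.mapComp g f).hom ▷ Za.act), e1, e2]
    exact E.symm
  have e3 : (T.mapId Ya.carrier).hom ▷ Ya.act ≫
        ((Tadj adj).unit ▷ Ya.act ⊗≫ T.map f ◁ φg ⊗≫ (lf : T.map f ≫ Za.act ⟶ Ya.act ≫ f) ▷ g)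
      = (T.map₂ adj.unit ▷ Ya.act ≫ compCell lf φg) ≫ (α_ Ya.act f g).inv := by
    rw [hU]; dsimp only [compCell]
    simp only [comp_whiskerRight, Category.assoc, inv_hom_whiskerRight_assoc]
    bicategory
  have e4 : (T.mapId Ya.carrier).hom ▷ Ya.act ≫ (𝟙 _ ⊗≫ Ya.act ◁ adj.unit ⊗≫ 𝟙 _)
      = (idCell Ya ≫ Ya.act ◁ adj.unit) ≫ (α_ Ya.act f g).inv := by
    dsimp only [idCell]; bicategory
  have hH : (Tadj adj).unit ▷ Ya.act ⊗≫ T.map f ◁ φg ⊗≫ (lf : T.map f ≫ Za.act ⟶ Ya.act ≫ f) ▷ g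
      = 𝟙 _ ⊗≫ Ya.act ◁ adj.unit ⊗≫ 𝟙 _ := by
    rw [← cancel_epi ((T.mapId Ya.carrier).hom ▷ Ya.act), e3, e4, H]
  obtain ⟨G1, G2⟩ := mate_inverse_aux adj (Tadj adj) lf φg hE hH
  exact ⟨lf, uniq, ⟨⟨mateFwd adj (Tadj adj) Za.act Ya.act φg, G1, G2⟩⟩, E, H,
    ⟨⟨lf, G2, G1⟩⟩⟩
end

section
/- Let S be a comonad on a finitely complete category B. If the underlying functor of S preserves finite limits, then the forgetful functor L : S-CoAlg → B from the category of S-coalgebras reflects exponentiable objects: if y is an S-coalgebra such that L(y) is an exponentiable object of B, then y is exponentiable in S-CoAlg. -/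
open CategoryTheory CategoryTheory.Limits MonoidalCategory

/-!
Since `S` preserves finite limits, the forgetful functor `L` creates them; in particular
coalgebras have equalizers and `L` preserves binary products. The latter gives a commuting
square `L ⋙ (L y × -) ≅ (y × -) ⋙ L` in which `L` is comonadic and `L ⋙ (L y × -)` has a
right adjoint, so the adjoint lifting theorem produces a right adjoint of `y × -`.
-/

namespace CategoryTheory

theorem Comonad.hasLimitsOfShape_coalgebra {B : Type*} [Category B] (S : Comonad B)
    (J : Type*) [Category J] [HasLimitsOfShape J B] [PreservesLimitsOfShape J (S : B ⥤ B)] :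
    HasLimitsOfShape J S.Coalgebra :=
  hasLimitsOfShape_of_hasLimitsOfShape_createsLimitsOfShape S.forget

theorem isLeftAdjoint_tensorLeft_of_comonadic {C B : Type*} [Category C] [Category B]
    [CartesianMonoidalCategory C] [CartesianMonoidalCategory B] [HasCoreflexiveEqualizers C]
    (F : C ⥤ B) [ComonadicLeftAdjoint F] [PreservesLimitsOfShape (Discrete WalkingPair) F]
    (y : C) [(tensorLeft (F.obj y)).IsLeftAdjoint] : (tensorLeft y).IsLeftAdjoint :=
  isLeftAdjoint_square_lift_comonadic (tensorLeft y) F F (tensorLeft (F.obj y))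
    (CartesianMonoidalCategory.prodComparisonNatIso F y).symm

end CategoryTheory

/-- Let `S` be a comonad on a finitely complete category `B` whose underlying functor
preserves finite limits.  Then the forgetful functor from `S`-coalgebras reflects
exponentiable objects: if the underlying object of a coalgebra `y` is exponentiable in
`B`, then `y` is exponentiable in the category of `S`-coalgebras. -/
theorem comonad_forget_reflects_exponentiable {B : Type*} [Category B]
    [HasFiniteLimits B] [CartesianMonoidalCategory B] (S : Comonad B)
    [PreservesFiniteLimits (S : B ⥤ B)]
    [CartesianMonoidalCategory (Comonad.Coalgebra S)]
    (y : Comonad.Coalgebra S) (h : Closed ((Comonad.forget S).obj y)) :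
    Nonempty (Closed y) := by
  have := S.hasLimitsOfShape_coalgebra WalkingParallelPair
  have := h.adj.isLeftAdjoint
  have := isLeftAdjoint_tensorLeft_of_comonadic S.forget y
  exact ⟨⟨_, Adjunction.ofIsLeftAdjoint (tensorLeft y)⟩⟩
end

section
/- Let S be a comonad preserving finite limits on a finitely complete category B, and let y be an S-coalgebra. Then the forgetful functor L induces a comonadic, limit-creating functor L/y : S-CoAlg/y → B/L(y) between slice categories, and consequently L reflects exponentiable morphisms: a morphism of S-coalgebras is exponentiable in S-CoAlg whenever its underlying morphism is exponentiable in B. -/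
/-!
When `S` is left exact, coalgebras have finite limits created by the forgetful functor `L`, so
`Over.post L : S-CoAlg / y ⥤ B / L y` is a left exact left adjoint that reflects isomorphisms;
Beck's theorem for coreflexive equalizers makes it comonadic, and a comonadic functor creates every
limit it preserves.

If a comonadic `L` preserves binary products and `L A` is exponentiable, then
`A × - ⋙ L ≅ L ⋙ L A × -` is a left adjoint, and the adjoint triangle theorem lifts this along
`L`: `A × -` is a left adjoint as well. Apply this to the comonadic slice functor.
-/

open CategoryTheory CategoryTheory.Limits

/-- An object is exponentiable if it is closed (old Mathlib `CategoryTheory.Exponentiable`). -/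
abbrev Exponentiable {C : Type*} [Category C] [CartesianMonoidalCategory C] (X : C) :=
  Closed X

namespace CategoryTheory

variable {C D : Type*} [Category C] [Category D]

noncomputable instance Comonad.forgetCreatesFiniteLimits (S : Comonad C)
    [PreservesFiniteLimits (S : C ⥤ C)] : CreatesFiniteLimits S.forget where
  createsFiniteLimits _ _ _ := inferInstance

instance Comonad.hasFiniteLimits_coalgebra [HasFiniteLimits C] (S : Comonad C)
    [PreservesFiniteLimits (S : C ⥤ C)] : HasFiniteLimits S.Coalgebra :=
  hasFiniteLimits_of_hasLimitsLimits_of_createsFiniteLimits S.forget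

instance Comonad.preservesLimitOfIsCoreflexivePair_of_preservesEqualizers (F : C ⥤ D)
    [PreservesLimitsOfShape WalkingParallelPair F] :
    Comonad.PreservesLimitOfIsCoreflexivePair F where
  out _ _ _ _ _ := inferInstance

instance Over.post_reflectsIsomorphisms (F : C ⥤ D) [F.ReflectsIsomorphisms] (X : C) :
    (Over.post F (X := X)).ReflectsIsomorphisms :=
  have : (Over.post F (X := X) ⋙ Over.forget (F.obj X)).ReflectsIsomorphisms :=
    inferInstanceAs (Over.forget X ⋙ F).ReflectsIsomorphisms
  reflectsIsomorphisms_of_comp _ (Over.forget (F.obj X))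

@[reducible]
noncomputable def Over.postComonadicLeftAdjoint [HasFiniteLimits C] (F : C ⥤ D)
    [F.IsLeftAdjoint] [F.ReflectsIsomorphisms] [PreservesFiniteLimits F] (X : C) :
    ComonadicLeftAdjoint (Over.post F (X := X)) :=
  Comonad.comonadicOfHasPreservesCoreflexiveEqualizersOfReflectsIsomorphisms
    (Adjunction.ofIsLeftAdjoint _)

open MonoidalCategory in
@[reducible]
noncomputable def closedOfComonadic [CartesianMonoidalCategory C] [CartesianMonoidalCategory D]
    [HasCoreflexiveEqualizers C] (L : C ⥤ D) [ComonadicLeftAdjoint L]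
    [PreservesLimitsOfShape (Discrete WalkingPair) L] (A : C) [Closed (L.obj A)] : Closed A :=
  have : (tensorLeft A ⋙ L).IsLeftAdjoint :=
    ((Adjunction.ofIsLeftAdjoint (L ⋙ tensorLeft (L.obj A))).ofNatIsoLeft
      (CartesianMonoidalCategory.prodComparisonNatIso L A).symm).isLeftAdjoint
  have : (tensorLeft A).IsLeftAdjoint := isLeftAdjoint_triangle_lift_comonadic L
  ⟨_, Adjunction.ofIsLeftAdjoint (tensorLeft A)⟩

end CategoryTheory

/-- Let `S` be a comonad preserving finite limits on a finitely complete category `B`, and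
let `y` be an `S`-coalgebra.  Then the forgetful functor induces a comonadic,
finite-limit-creating functor between the slice categories
`S-CoAlg / y ⥤ B / (forget S).obj y`, and consequently the forgetful functor reflects
exponentiable morphisms: a morphism of coalgebras is exponentiable whenever its underlying
morphism is exponentiable in `B`. -/
theorem comonad_forget_slice_comonadic_and_reflects_exponentiable_morphisms
    {B : Type*} [Category B] [HasFiniteLimits B] (S : Comonad B)
    [PreservesFiniteLimits (S : B ⥤ B)] (y : Comonad.Coalgebra S)
    [CartesianMonoidalCategory (Over ((Comonad.forget S).obj y))]
    [CartesianMonoidalCategory (Over y)] :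
    Nonempty (ComonadicLeftAdjoint (Over.post (Comonad.forget S) (X := y))) ∧
    (∀ (J : Type) [SmallCategory J] [FinCategory J],
      Nonempty (CreatesLimitsOfShape J (Over.post (Comonad.forget S) (X := y)))) ∧
    (∀ (x : Comonad.Coalgebra S) (fm : x ⟶ y),
      Exponentiable (Over.mk ((Comonad.forget S).map fm)) →
        Nonempty (Exponentiable (Over.mk fm))) := by
  let := Over.postComonadicLeftAdjoint (Comonad.forget S) y
  refine ⟨⟨this⟩, fun J _ _ => ⟨comonadicCreatesLimitsOfShapeOfPreservesLimitsOfShape _⟩,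
    fun x fm hexp => ⟨?_⟩⟩
  have : Closed ((Over.post (Comonad.forget S)).obj (Over.mk fm)) := hexp
  exact closedOfComonadic (Over.post (Comonad.forget S) (X := y)) (Over.mk fm)
end
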